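/- Let H be a real inner product space whose finite-dimensional subspaces are complete (e.g., H a real Hilbert space), let v₁, …, vₙ ∈ H, let c ∈ ℕ, Ω ⊆ {1,…,n}×{1,…,c}, Ỹ ∈ ℝ^{n×c}, λ ≥ 0, and S₁, …, S_c ⊆ {1,…,n}. If the minimization of J over W ∈ H^c attains its minimum at some W, then it also attains its minimum at some W* = (w₁*, …, w_c*) each of whose components lies in the span of {v₁,…,vₙ}; that is, there exists a matrix A = (a_{ij}) ∈ ℝ^{n×c} with w_j* = ∑_{i=1}^n a_{ij} v_i for every j, and J(W*) = inf_{W ∈ H^c} J(W). -/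

import Mathlib

/-- The nuclear norm of a real matrix `M`: the trace of the positive
semidefinite square root of `Mᵀ * M`. -/
noncomputable def nuclearNorm {m n : Type*} [Fintype m] [Fintype n] [DecidableEq n]
    (M : Matrix m n ℝ) : ℝ :=
  let hA := (Matrix.posSemidef_conjTranspose_mul_self M).isHermitian
  ((hA.eigenvectorUnitary : Matrix n n ℝ) * Matrix.diagonal ((RCLike.ofReal ∘ Real.sqrt ∘ hA.eigenvalues : n → ℝ)) *
    (star hA.eigenvectorUnitary : Matrix n n ℝ)).trace

/-- The row-submatrix of `M` consisting of the rows whose index lies in `S`. -/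
def rowSubmatrix {n m : Type*} (M : Matrix n m ℝ) (S : Finset n) :
    Matrix {i // i ∈ S} m ℝ :=
  M.submatrix (fun i => (i : n)) id

/-- The prediction matrix `P(W)` with entries `⟨v i, w j⟩`. -/
noncomputable def predMatrix {H : Type*} [NormedAddCommGroup H] [InnerProductSpace ℝ H]
    {n c : ℕ} (v : Fin n → H) (W : Fin c → H) : Matrix (Fin n) (Fin c) ℝ :=
  fun i j => inner ℝ (v i) (W j)

/-- The objective `J(W)`. -/
noncomputable def objJ {H : Type*} [NormedAddCommGroup H] [InnerProductSpace ℝ H]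
    {n c : ℕ} (v : Fin n → H) (Ω : Finset (Fin n × Fin c))
    (Ytil : Matrix (Fin n) (Fin c) ℝ) (lam : ℝ) (S : Fin c → Finset (Fin n))
    (W : Fin c → H) : ℝ :=
  (1 / 2) * ∑ p ∈ Ω, (predMatrix v W p.1 p.2 - Ytil p.1 p.2) ^ 2 +
    lam * (∑ k : Fin c, nuclearNorm (rowSubmatrix (predMatrix v W) (S k)) -
      nuclearNorm (predMatrix v W))

/-- The orthogonal projection of `x` onto the span of `{v 1, …, v n}` (this span is
finite-dimensional, hence complete, so the orthogonal projection exists). -/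
noncomputable def projSpan {H : Type*} [NormedAddCommGroup H] [InnerProductSpace ℝ H]
    {n : ℕ} (v : Fin n → H) (x : H) : H :=
  haveI : FiniteDimensional ℝ (Submodule.span ℝ (Set.range v)) :=
    FiniteDimensional.span_of_finite ℝ (Set.finite_range v)
  (Submodule.orthogonalProjectionOnto (Submodule.span ℝ (Set.range v)) x : H)

/-! The objective sees `W` only through the inner products `⟨v i, w j⟩`, and these do not change
when each `w j` is replaced by its orthogonal projection onto `span {v₁, …, vₙ}`. Projecting a
minimizer componentwise therefore gives a minimizer in the span. -/

section

variable {H : Type*} [NormedAddCommGroup H] [InnerProductSpace ℝ H] {n c : ℕ} (v : Fin n → H)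

theorem projSpan_mem_span (x : H) : projSpan v x ∈ Submodule.span ℝ (Set.range v) :=
  Subtype.prop _

theorem inner_projSpan (i : Fin n) (x : H) : inner ℝ (v i) (projSpan v x) = inner ℝ (v i) x :=
  haveI : FiniteDimensional ℝ (Submodule.span ℝ (Set.range v)) :=
    FiniteDimensional.span_of_finite ℝ (Set.finite_range v)
  Submodule.inner_orthogonalProjectionOnto_eq_of_mem_left
    (⟨v i, Submodule.subset_span ⟨i, rfl⟩⟩ : Submodule.span ℝ (Set.range v)) x

theorem predMatrix_projSpan (W : Fin c → H) :
    predMatrix v (fun j => projSpan v (W j)) = predMatrix v W := by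
  ext i j
  exact inner_projSpan v i (W j)

theorem objJ_congr_predMatrix (Ω : Finset (Fin n × Fin c)) (Ytil : Matrix (Fin n) (Fin c) ℝ)
    (lam : ℝ) (S : Fin c → Finset (Fin n)) {W W' : Fin c → H}
    (h : predMatrix v W = predMatrix v W') :
    objJ v Ω Ytil lam S W = objJ v Ω Ytil lam S W' := by
  unfold objJ
  rw [h]

theorem objJ_projSpan (Ω : Finset (Fin n × Fin c)) (Ytil : Matrix (Fin n) (Fin c) ℝ)
    (lam : ℝ) (S : Fin c → Finset (Fin n)) (W : Fin c → H) :
    objJ v Ω Ytil lam S (fun j => projSpan v (W j)) = objJ v Ω Ytil lam S W :=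
  objJ_congr_predMatrix v Ω Ytil lam S (predMatrix_projSpan v W)

theorem exists_coeff_eq_projSpan (W : Fin c → H) :
    ∃ A : Matrix (Fin n) (Fin c) ℝ,
      (fun j => ∑ i : Fin n, A i j • v i) = fun j => projSpan v (W j) := by
  choose a ha using fun j =>
    (Submodule.mem_span_range_iff_exists_fun ℝ).mp (projSpan_mem_span v (W j))
  exact ⟨Matrix.of fun i j => a j i, funext ha⟩

end

theorem exists_minimizer_in_span_general
    {H : Type*} [NormedAddCommGroup H] [InnerProductSpace ℝ H]
    {n c : ℕ} (v : Fin n → H) (Ω : Finset (Fin n × Fin c))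
    (Ytil : Matrix (Fin n) (Fin c) ℝ) (lam : ℝ)
    (S : Fin c → Finset (Fin n))
    (hmin : ∃ W : Fin c → H, ∀ W' : Fin c → H,
      objJ v Ω Ytil lam S W ≤ objJ v Ω Ytil lam S W') :
    ∃ A : Matrix (Fin n) (Fin c) ℝ,
      (∀ W' : Fin c → H,
        objJ v Ω Ytil lam S (fun j => ∑ i : Fin n, A i j • v i) ≤ objJ v Ω Ytil lam S W') ∧
      objJ v Ω Ytil lam S (fun j => ∑ i : Fin n, A i j • v i) =
        ⨅ W : Fin c → H, objJ v Ω Ytil lam S W := by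
  obtain ⟨W, hW⟩ := hmin
  obtain ⟨A, hA⟩ := exists_coeff_eq_projSpan v W
  have hleast : IsLeast (Set.range (objJ v Ω Ytil lam S)) (objJ v Ω Ytil lam S W) :=
    ⟨⟨W, rfl⟩, Set.forall_mem_range.2 hW⟩
  refine ⟨A, ?_⟩
  rw [hA, objJ_projSpan]
  exact ⟨hW, hleast.isGLB.ciInf_eq.symm⟩

theorem exists_minimizer_in_span
    {H : Type*} [NormedAddCommGroup H] [InnerProductSpace ℝ H]
    {n c : ℕ} (v : Fin n → H) (Ω : Finset (Fin n × Fin c))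
    (Ytil : Matrix (Fin n) (Fin c) ℝ) (lam : ℝ) (hlam : 0 ≤ lam)
    (S : Fin c → Finset (Fin n))
    (hmin : ∃ W : Fin c → H, ∀ W' : Fin c → H,
      objJ v Ω Ytil lam S W ≤ objJ v Ω Ytil lam S W') :
    ∃ A : Matrix (Fin n) (Fin c) ℝ,
      (∀ W' : Fin c → H,
        objJ v Ω Ytil lam S (fun j => ∑ i : Fin n, A i j • v i) ≤ objJ v Ω Ytil lam S W') ∧
      objJ v Ω Ytil lam S (fun j => ∑ i : Fin n, A i j • v i) =
        ⨅ W : Fin c → H, objJ v Ω Ytil lam S W :=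
  exists_minimizer_in_span_general v Ω Ytil lam S hmin
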